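/- Let u^c ∈ [0,1]^{N×T} be continuous controls and u^b ∈ {0,1}^{N×T} the binary controls produced by sum-up rounding with the SOS1 property. Define ε(Δt) = max_{k=1,…,T} |∑_{τ=1}^k (∑_{j=1}^N u^c_{jτ} − 1) Δt|. Then for every time step k = 1,…,T, ‖∑_{τ=1}^k (u^c_τ − u^b_τ) Δt‖_∞ ≤ (N−1) Δt + ((2N−1)/N) ε(Δt). -/

import Mathlib

open Finset

/-- The controller selected by sum-up rounding at time step `k` (0-indexed):
the smallest index `j ∈ {0,…,N-1}` maximizing the cumulative deviation
`p̂_{jk} = ∑_{τ=0}^{k} u^c_{jτ} Δt − ∑_{τ=0}^{k-1} u^b_{jτ} Δt`, where the binary control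
`u^b` at earlier steps is the indicator of the previously selected controllers. -/
noncomputable def surSel (N : ℕ) (Δt : ℝ) (uc : ℕ → ℕ → ℝ) : ℕ → ℕ := fun k =>
  Nat.strongRecOn k (fun n ih =>
    let ub : ℕ → ℕ → ℝ := fun j τ => if h : τ < n then (if ih τ h = j then 1 else 0) else 0
    let phat : ℕ → ℝ := fun j =>
      (∑ τ ∈ Finset.range (n + 1), uc j τ * Δt) - ∑ τ ∈ Finset.range n, ub j τ * Δt
    ((Finset.range N).filter (fun j => ∀ j' ∈ Finset.range N, phat j' ≤ phat j)).min.getD 0)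

/-- The binary controls produced by sum-up rounding. -/
noncomputable def surRound (N : ℕ) (Δt : ℝ) (uc : ℕ → ℕ → ℝ) : ℕ → ℕ → ℝ :=
  fun j k => if surSel N Δt uc k = j then 1 else 0

/-!
Write `D_k j` for the cumulative deviation of controller `j` after `k` steps. Summed over the
controllers it equals the cumulative SOS1 violation `θ_k`, since the rounded controls pick exactly
one controller per step. A controller that is not selected only gains, while the selected one
has the largest priority `p̂ = D_k j + u_{jk} Δt`, which is at least the average
`(θ_{k+1} + Δt) / N`. Hence `N D_k j ≥ -((N - 1) Δt + ε)` for all `j`. Writing `D_k j` as `θ_k`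
minus the deviations of the other `N - 1` controllers turns this lower bound into the upper
bound `N D_k j ≤ (N - 1)² Δt + (2N - 1) ε`. Only the maximality of the selected priority
enters, so the bound holds whatever the tie-breaking rule.
-/

namespace SumUpRounding

variable {ι : Type*} (Δt : ℝ) (u : ι → ℕ → ℝ)

noncomputable def sos1Violation (s : Finset ι) (k : ℕ) : ℝ :=
  ∑ τ ∈ range k, ((∑ j ∈ s, u j τ) - 1) * Δt

@[simp]
lemma sos1Violation_zero (s : Finset ι) : sos1Violation Δt u s 0 = 0 := by
  simp [sos1Violation]

variable [DecidableEq ι] (sel : ℕ → ι)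

noncomputable def cumDeviation (k : ℕ) (j : ι) : ℝ :=
  ∑ τ ∈ range k, (u j τ - if sel τ = j then 1 else 0) * Δt

noncomputable def priority (k : ℕ) (j : ι) : ℝ :=
  cumDeviation Δt u sel k j + u j k * Δt

def SelectsMaxPriority (s : Finset ι) : Prop :=
  ∀ k, sel k ∈ s ∧ ∀ j ∈ s, priority Δt u sel k j ≤ priority Δt u sel k (sel k)

@[simp]
lemma cumDeviation_zero (j : ι) : cumDeviation Δt u sel 0 j = 0 := by
  simp [cumDeviation]

lemma cumDeviation_succ (k : ℕ) (j : ι) :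
    cumDeviation Δt u sel (k + 1) j =
      priority Δt u sel k j - (if sel k = j then 1 else 0) * Δt := by
  rw [priority, cumDeviation, sum_range_succ, ← cumDeviation]
  ring

lemma sum_cumDeviation {s : Finset ι} (hsel : ∀ τ, sel τ ∈ s) (k : ℕ) :
    ∑ j ∈ s, cumDeviation Δt u sel k j = sos1Violation Δt u s k := by
  unfold cumDeviation
  rw [sum_comm]
  refine sum_congr rfl fun τ _ => ?_
  rw [← sum_mul, sum_sub_distrib, sum_ite_eq, if_pos (hsel τ)]

lemma sum_priority {s : Finset ι} (hsel : ∀ τ, sel τ ∈ s) (k : ℕ) :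
    ∑ j ∈ s, priority Δt u sel k j = sos1Violation Δt u s (k + 1) + Δt := by
  have hsucc (j : ι) : priority Δt u sel k j =
      cumDeviation Δt u sel (k + 1) j + (if sel k = j then 1 else 0) * Δt := by
    rw [cumDeviation_succ]
    ring
  simp only [hsucc, sum_add_distrib, sum_cumDeviation Δt u sel hsel, ← sum_mul, sum_ite_eq,
    if_pos (hsel k), one_mul]

variable {Δt u sel} {s : Finset ι}

lemma neg_le_mul_cumDeviation_succ_sel (hsel : SelectsMaxPriority Δt u sel s) {E : ℝ} {k : ℕ}
    (hθ : -E ≤ sos1Violation Δt u s (k + 1)) :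
    -((#s - 1) * Δt + E) ≤ #s * cumDeviation Δt u sel (k + 1) (sel k) := by
  have hmean : ∑ j ∈ s, priority Δt u sel k j ≤ #s * priority Δt u sel k (sel k) := by
    simpa using sum_le_card_nsmul s _ _ (hsel k).2
  rw [sum_priority Δt u sel (fun τ => (hsel τ).1)] at hmean
  rw [cumDeviation_succ, if_pos rfl]
  linarith

lemma neg_le_mul_cumDeviation (hsel : SelectsMaxPriority Δt u sel s) (hΔt : 0 ≤ Δt)
    (hu : ∀ j ∈ s, ∀ τ, 0 ≤ u j τ) {E : ℝ} {k : ℕ}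
    (hθ : ∀ m ≤ k, -E ≤ sos1Violation Δt u s m) {j : ι} (hj : j ∈ s) :
    -((#s - 1) * Δt + E) ≤ #s * cumDeviation Δt u sel k j := by
  induction k with
  | zero =>
    have hs : (1 : ℝ) ≤ #s := by exact_mod_cast card_pos.mpr ⟨j, hj⟩
    have hE : 0 ≤ E := by simpa using hθ 0 le_rfl
    simp only [cumDeviation_zero, mul_zero, neg_nonpos]
    nlinarith
  | succ k ih =>
    by_cases hk : sel k = j
    · exact hk ▸ neg_le_mul_cumDeviation_succ_sel hsel (hθ (k + 1) le_rfl)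
    · have hgain : cumDeviation Δt u sel k j ≤ cumDeviation Δt u sel (k + 1) j := by
        rw [cumDeviation_succ, if_neg hk, priority]
        nlinarith [hu j hj k]
      have := ih fun m hm => hθ m (hm.trans k.le_succ)
      have : (0 : ℝ) ≤ #s := by positivity
      nlinarith

lemma mul_cumDeviation_le (hsel : SelectsMaxPriority Δt u sel s) (hΔt : 0 ≤ Δt)
    (hu : ∀ j ∈ s, ∀ τ, 0 ≤ u j τ) {E : ℝ} {k : ℕ}
    (hθ : ∀ m ≤ k, |sos1Violation Δt u s m| ≤ E) {j : ι} (hj : j ∈ s) :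
    #s * cumDeviation Δt u sel k j ≤ (#s - 1) ^ 2 * Δt + (2 * #s - 1) * E := by
  have hothers : -((#s - 1) * ((#s - 1) * Δt + E)) ≤
      #s * ∑ i ∈ s.erase j, cumDeviation Δt u sel k i := by
    have := card_nsmul_le_sum (s.erase j) (fun i => #s * cumDeviation Δt u sel k i) _
      fun i hi => neg_le_mul_cumDeviation hsel hΔt hu (fun m hm => neg_le_of_abs_le (hθ m hm))
        (mem_of_mem_erase hi)
    rw [nsmul_eq_mul, cast_card_erase_of_mem hj] at this
    rw [mul_sum]
    linarith
  have htotal : ∑ i ∈ s.erase j, cumDeviation Δt u sel k i + cumDeviation Δt u sel k j =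
      sos1Violation Δt u s k := by
    rw [sum_erase_add _ _ hj, sum_cumDeviation Δt u sel fun τ => (hsel τ).1]
  have hθk := (abs_le.mp (hθ k le_rfl)).2
  have : (0 : ℝ) ≤ #s := by positivity
  nlinarith

theorem abs_cumDeviation_le (hsel : SelectsMaxPriority Δt u sel s) (hΔt : 0 ≤ Δt)
    (hu : ∀ j ∈ s, ∀ τ, 0 ≤ u j τ) {E : ℝ} {k : ℕ}
    (hθ : ∀ m ≤ k, |sos1Violation Δt u s m| ≤ E) {j : ι} (hj : j ∈ s) :
    |cumDeviation Δt u sel k j| ≤ (#s - 1) * Δt + (2 * #s - 1) / #s * E := by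
  have hs : (1 : ℝ) ≤ #s := by exact_mod_cast card_pos.mpr ⟨j, hj⟩
  have hE : 0 ≤ E := by simpa using hθ 0 k.zero_le
  have hlower := neg_le_mul_cumDeviation hsel hΔt hu (fun m hm => neg_le_of_abs_le (hθ m hm)) hj
  have hupper := mul_cumDeviation_le hsel hΔt hu hθ hj
  have hbound : (#s - 1) * Δt + (2 * #s - 1) / #s * E =
      (#s * (#s - 1) * Δt + (2 * #s - 1) * E) / #s := by
    field_simp
  rw [hbound, le_div_iff₀ (by positivity)]
  rcases abs_cases (cumDeviation Δt u sel k j) with ⟨h, -⟩ | ⟨h, -⟩ <;> rw [h] <;>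
    nlinarith

end SumUpRounding

open SumUpRounding

lemma surSel_eq (N : ℕ) (Δt : ℝ) (uc : ℕ → ℕ → ℝ) (k : ℕ) :
    surSel N Δt uc k =
      ((range N).filter fun j => ∀ j' ∈ range N,
        priority Δt uc (surSel N Δt uc) k j' ≤ priority Δt uc (surSel N Δt uc) k j).min.getD 0 := by
  conv_lhs => unfold surSel; rw [Nat.strongRecOn_eq]
  have hphat (j : ℕ) : (∑ τ ∈ range (k + 1), uc j τ * Δt) -
      ∑ τ ∈ range k, (if h : τ < k then (if surSel N Δt uc τ = j then 1 else 0) else 0) * Δt =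
      priority Δt uc (surSel N Δt uc) k j := by
    have hub : ∑ τ ∈ range k,
        (if h : τ < k then (if surSel N Δt uc τ = j then (1 : ℝ) else 0) else 0) * Δt =
        ∑ τ ∈ range k, (if surSel N Δt uc τ = j then 1 else 0) * Δt :=
      sum_congr rfl fun τ hτ => by rw [dif_pos (mem_range.mp hτ)]
    rw [hub, priority, cumDeviation, sum_range_succ]
    simp only [sub_mul, sum_sub_distrib]
    ring
  exact congrArg (fun p => ((range N).filter fun j => ∀ j' ∈ range N, p j' ≤ p j).min.getD 0)
    (funext hphat)

lemma selectsMaxPriority_surSel {N : ℕ} (hN : 0 < N) (Δt : ℝ) (uc : ℕ → ℕ → ℝ) :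
    SelectsMaxPriority Δt uc (surSel N Δt uc) (range N) := by
  intro k
  set p := priority Δt uc (surSel N Δt uc) k
  set S := (range N).filter fun j => ∀ j' ∈ range N, p j' ≤ p j
  have hS : S.Nonempty := by
    obtain ⟨j, hj, hmax⟩ := exists_max_image (range N) p (nonempty_range_iff.mpr hN.ne')
    exact ⟨j, mem_filter.mpr ⟨hj, hmax⟩⟩
  have hmem : S.min.getD 0 ∈ S := by
    rw [← coe_min' hS]
    exact min'_mem S hS
  rw [← surSel_eq] at hmem
  exact mem_filter.mp hmem

/-- Sum-up rounding approximation bound: for every time step `k`, the max-norm of the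
cumulative deviation between the continuous controls `uc` and the rounded controls is at most
`(N−1)Δt + ((2N−1)/N) ε(Δt)`, where `ε(Δt)` is the maximum cumulative SOS1 violation of `uc`. -/
theorem surRound_cumulative_deviation_bound (N T : ℕ) (hN : 2 ≤ N) (hT : 0 < T)
    (Δt : ℝ) (hΔt : 0 < Δt)
    (uc : ℕ → ℕ → ℝ) (huc : ∀ j k, 0 ≤ uc j k ∧ uc j k ≤ 1) :
    ∀ k < T,
      (Finset.range N).sup' (Finset.nonempty_range_iff.mpr (by omega))
          (fun j => |∑ τ ∈ Finset.range (k + 1), (uc j τ - surRound N Δt uc j τ) * Δt|) ≤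
        ((N : ℝ) - 1) * Δt +
          ((2 * (N : ℝ) - 1) / N) *
            (Finset.range T).sup' (Finset.nonempty_range_iff.mpr hT.ne')
              (fun k' => |∑ τ ∈ Finset.range (k' + 1),
                  ((∑ j ∈ Finset.range N, uc j τ) - 1) * Δt|) := by
  intro k hk
  set ε := (range T).sup' (nonempty_range_iff.mpr hT.ne')
    fun k' => |sos1Violation Δt uc (range N) (k' + 1)|
  have hθ : ∀ m ≤ k + 1, |sos1Violation Δt uc (range N) m| ≤ ε := by
    rintro (_ | m) hm
    · simpa using (abs_nonneg _).trans
        (le_sup' (fun k' => |sos1Violation Δt uc (range N) (k' + 1)|) (mem_range.mpr hT))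
    · exact le_sup' (fun k' => |sos1Violation Δt uc (range N) (k' + 1)|)
        (mem_range.mpr (by omega))
  refine sup'_le _ _ fun j hj => ?_
  have := abs_cumDeviation_le (selectsMaxPriority_surSel (by omega) Δt uc) hΔt.le
    (fun j _ τ => (huc j τ).1) hθ hj
  rwa [card_range] at this
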